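/- arXiv:2406.13524 — 2 statements merged into one kernel-verified Lean document; each statement's English description precedes it below -/
import Mathlib

section
/- Let g be a rational map on the Riemann sphere of degree at least 2 with a completely invariant Fatou domain V such that every non-trivial Julia component of g is a quasicircle bounding an eventually superattracting Fatou domain of g. Then g has only finitely many non-trivial periodic Julia components. -/
open Set Topology Filter Metric OnePoint MeasureTheory Bornology
open scoped Classical

noncomputable section

notation "ℂ∞" => OnePoint ℂ

instance : UniformSpace ℂ∞ := uniformSpaceOfCompactR1

/-- Junk-valued retraction from the Riemann sphere to `ℂ` (sending `∞` to `0`). -/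
def sphDown : ℂ∞ → ℂ := fun z => z.elim 0 id

/-- The inversion `z ↦ 1/z` on the Riemann sphere, interchanging `0` and `∞`. -/
def sphereInv : ℂ∞ → ℂ∞ :=
  fun z => z.elim ((0 : ℂ) : ℂ∞) (fun w => if w = 0 then ∞ else ((w⁻¹ : ℂ) : ℂ∞))

/-- Chart readout near a point `c` of the sphere: the identity chart at finite
points and the chart `w ↦ 1/w` at `∞`. -/
def readAt (c : ℂ∞) : ℂ∞ → ℂ :=
  if c = ∞ then fun w => sphDown (sphereInv w) else sphDown

/-- Chart parametrization near a point `c` of the sphere. -/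
def patchAt (c : ℂ∞) : ℂ → ℂ∞ :=
  if c = ∞ then fun w => sphereInv ((w : ℂ∞)) else fun w => (w : ℂ∞)

/-- The coordinate of a point of the sphere in its own chart. -/
def coordAt (c : ℂ∞) : ℂ := if c = ∞ then 0 else sphDown c

/-- A self-map of the Riemann sphere is holomorphic at a point if it is continuous
there and is analytic when read in the standard charts. -/
def SphereHolomorphicAt (F : ℂ∞ → ℂ∞) (z : ℂ∞) : Prop :=
  ContinuousAt F z ∧ AnalyticAt ℂ (fun w : ℂ => readAt (F z) (F (patchAt z w))) (coordAt z)

/-- A critical point: a point at which the map is not locally injective. -/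
def IsCriticalPt (F : ℂ∞ → ℂ∞) (z : ℂ∞) : Prop :=
  ∀ s ∈ 𝓝 z, ¬ Set.InjOn F s

/-- A rational map of the Riemann sphere of degree at least two, viewed as a
holomorphic self-map of `ℂ∞` for which all but finitely many points have exactly
`deg` preimages. -/
structure RationalMap where
  toFun : ℂ∞ → ℂ∞
  holo : ∀ z, SphereHolomorphicAt toFun z
  deg : ℕ
  two_le_deg : 2 ≤ deg
  generic_fiber : {w : ℂ∞ | (toFun ⁻¹' {w}).ncard ≠ deg}.Finite

/-- The Fatou set: the largest open set on which the iterates are equicontinuous. -/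
def fatouSet (F : ℂ∞ → ℂ∞) : Set ℂ∞ :=
  ⋃₀ {s | IsOpen s ∧ EquicontinuousOn (fun n : ℕ => F^[n]) s}

/-- The Julia set: the complement of the Fatou set. -/
def juliaSet (F : ℂ∞ → ℂ∞) : Set ℂ∞ := (fatouSet F)ᶜ

/-- The collection of connected components of a subset of a topological space. -/
def componentsOf {X : Type*} [TopologicalSpace X] (s : Set X) : Set (Set X) :=
  {C | ∃ z ∈ s, C = connectedComponentIn s z}

def IsFatouComponent (f : RationalMap) (W : Set ℂ∞) : Prop :=
  W ∈ componentsOf (fatouSet f.toFun)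

def IsJuliaComponent (f : RationalMap) (E : Set ℂ∞) : Prop :=
  E ∈ componentsOf (juliaSet f.toFun)

/-- For a Julia component `E`, the Julia component containing `F(E)`. -/
def juliaImage (F : ℂ∞ → ℂ∞) (E : Set ℂ∞) : Set ℂ∞ :=
  ⋃ z ∈ E, connectedComponentIn (juliaSet F) (F z)

def IsPeriodicJuliaComponent (f : RationalMap) (E : Set ℂ∞) : Prop :=
  IsJuliaComponent f E ∧ ∃ p : ℕ, 0 < p ∧ (juliaImage f.toFun)^[p] E = E

def IsEventuallyPeriodicJuliaComponent (f : RationalMap) (E : Set ℂ∞) : Prop :=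
  IsJuliaComponent f E ∧ ∃ k : ℕ, IsPeriodicJuliaComponent f ((juliaImage f.toFun)^[k] E)

def IsWanderingJuliaComponent (f : RationalMap) (E : Set ℂ∞) : Prop :=
  IsJuliaComponent f E ∧ ¬ IsEventuallyPeriodicJuliaComponent f E

/-- The postcritical set `P_f = closure (⋃ n ≥ 1, f^n(C(f)))`. -/
def postcriticalSet (F : ℂ∞ → ℂ∞) : Set ℂ∞ :=
  closure (⋃ n : ℕ, F^[n + 1] '' {z | IsCriticalPt F z})

def GeometricallyFinite (f : RationalMap) : Prop :=
  (postcriticalSet f.toFun ∩ juliaSet f.toFun).Finite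

/-- An attracting Fatou domain: a periodic Fatou component containing an attracting
periodic point to which the iterates converge locally uniformly. -/
def IsAttractingFatouComponent (f : RationalMap) (W : Set ℂ∞) : Prop :=
  IsFatouComponent f W ∧
  ∃ p : ℕ, 0 < p ∧ ∃ z₀ ∈ W, f.toFun^[p] z₀ = z₀ ∧
    TendstoLocallyUniformlyOn (fun n : ℕ => f.toFun^[p * n]) (fun _ => z₀) atTop W

/-- A fixed (invariant) attracting Fatou domain. -/
def IsFixedAttracting (f : RationalMap) (W : Set ℂ∞) : Prop :=
  IsFatouComponent f W ∧ f.toFun '' W = W ∧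
  ∃ z₀ ∈ W, f.toFun z₀ = z₀ ∧
    TendstoLocallyUniformlyOn (fun n : ℕ => f.toFun^[n]) (fun _ => z₀) atTop W

/-- A fixed attracting Fatou domain whose attracting fixed point is `∞`. -/
def IsFixedAttractingAtInfty (f : RationalMap) (W : Set ℂ∞) : Prop :=
  IsFatouComponent f W ∧ f.toFun '' W = W ∧ (∞ : ℂ∞) ∈ W ∧ f.toFun ∞ = ∞ ∧
    TendstoLocallyUniformlyOn (fun n : ℕ => f.toFun^[n]) (fun _ => (∞ : ℂ∞)) atTop W

def InfinitelyConnected (W : Set ℂ∞) : Prop := (componentsOf Wᶜ).Infinite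

def MultiplyConnected (W : Set ℂ∞) : Prop := ¬ IsPreconnected Wᶜ

/-- The finite part of a subset of the sphere, viewed inside `ℂ`. -/
def finitePart (C : Set ℂ∞) : Set ℂ := (fun z : ℂ => (z : ℂ∞)) ⁻¹' C

/-- Two domains are conformally homeomorphic if there is a bijective holomorphic
map from one onto the other. -/
def ConformallyHomeomorphic (W V : Set ℂ∞) : Prop :=
  ∃ φ : ℂ∞ → ℂ∞, (∀ z ∈ W, SphereHolomorphicAt φ z) ∧ Set.BijOn φ W V

/-- A round circle on the Riemann sphere: a Euclidean circle in `ℂ`, or a straight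
line together with `∞`. -/
def IsRoundCircle (C : Set ℂ∞) : Prop :=
  (∃ c : ℂ, ∃ r : ℝ, 0 < r ∧ C = (fun z : ℂ => (z : ℂ∞)) '' Metric.sphere c r) ∨
  (∃ a b : ℂ, b ≠ 0 ∧
     C = insert (∞ : ℂ∞) ((fun z : ℂ => (z : ℂ∞)) '' {z : ℂ | ∃ t : ℝ, z = a + t * b}))

/-- A circle domain: a domain all of whose boundary components are round circles
or points. -/
def IsCircleDomain (Ω : Set ℂ∞) : Prop :=
  IsOpen Ω ∧ IsConnected Ω ∧
  ∀ C ∈ componentsOf (frontier Ω), IsRoundCircle C ∨ ∃ z, C = {z}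

/-- A Jordan curve in `ℂ`: the image of an injective continuous loop. -/
def IsJordanCurve (S : Set ℂ) : Prop :=
  ∃ γ : ℝ → ℂ, Continuous γ ∧ Function.Periodic γ 1 ∧ Set.InjOn γ (Set.Ico (0:ℝ) 1) ∧
    S = Set.range γ

/-- `L` is a (closed) subarc of the Jordan curve `S` joining `p` and `q`. -/
def IsSubarcJoining (S L : Set ℂ) (p q : ℂ) : Prop :=
  ∃ γ : ℝ → ℂ, Continuous γ ∧ Function.Periodic γ 1 ∧ Set.InjOn γ (Set.Ico (0:ℝ) 1) ∧
    S = Set.range γ ∧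
    ∃ a b : ℝ, a ≤ b ∧ b ≤ a + 1 ∧ γ a = p ∧ γ b = q ∧ L = γ '' Set.Icc a b

/-- The `K`-bounded turning condition for a Jordan curve `S ⊆ ℂ`. -/
def BoundedTurning (K : ℝ) (S : Set ℂ) : Prop :=
  ∀ p ∈ S, ∀ q ∈ S, p ≠ q → ∀ L : Set ℂ, IsSubarcJoining S L p q →
    Metric.diam L ≤ Metric.diam (S \ L) → Metric.diam L ≤ K * dist p q

/-- A quasicircle: a Jordan curve satisfying some bounded turning condition. -/
def IsQuasicircle (S : Set ℂ) : Prop :=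
  IsJordanCurve S ∧ ∃ K : ℝ, 1 ≤ K ∧ BoundedTurning K S

/-- A Jordan disk: a bounded domain in `ℂ` bounded by a Jordan curve. -/
def IsJordanDisk (D : Set ℂ) : Prop :=
  IsOpen D ∧ IsConnected D ∧ IsBounded D ∧ IsJordanCurve (frontier D)

/-- A smooth Jordan curve in `ℂ`: the image of an injective regular smooth loop. -/
def IsSmoothJordanCurve (S : Set ℂ) : Prop :=
  ∃ γ : ℝ → ℂ, ContDiff ℝ (⊤ : ℕ∞) γ ∧ Function.Periodic γ 1 ∧ Set.InjOn γ (Set.Ico (0:ℝ) 1) ∧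
    (∀ t, deriv γ t ≠ 0) ∧ S = Set.range γ

/-- A subset of the sphere is `τ`-fat if every disk centered on it, not containing
it, captures at least a `τ` proportion of area. -/
def IsFatSet (τ : ℝ) (A : Set ℂ∞) : Prop :=
  ∀ x : ℂ, (x : ℂ∞) ∈ A → ∀ r : ℝ, 0 < r →
    ¬ A ⊆ (fun z : ℂ => (z : ℂ∞)) '' Metric.ball x r →
    ENNReal.ofReal τ * volume (Metric.ball x r) ≤ volume (finitePart A ∩ Metric.ball x r)

/-- A domain is cofat if all its complementary components are `τ`-fat for a common `τ > 0`. -/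
def IsCofat (Ω : Set ℂ∞) : Prop :=
  ∃ τ : ℝ, 0 < τ ∧ ∀ C ∈ componentsOf Ωᶜ, IsFatSet τ C

/-- The degree of a proper map `F : s → t`: the unique `d` such that infinitely many
(equivalently, all but finitely many) points of `t` have exactly `d` preimages in `s`. -/
def mapDegreeOn (F : ℂ∞ → ℂ∞) (s t : Set ℂ∞) : ℕ :=
  sSup {d : ℕ | {w | w ∈ t ∧ (s ∩ F ⁻¹' {w}).ncard = d}.Infinite}

/-- The filled set `Ê`: the union of `E` with the complementary components of `E`
disjoint from `W`. -/
def fillIn (E W : Set ℂ∞) : Set ℂ∞ :=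
  E ∪ ⋃₀ {C | C ∈ componentsOf Eᶜ ∧ C ∩ W = ∅}

/-- A superattracting Fatou component: a periodic component containing a periodic
critical point. -/
def IsSuperattractingComponent (g : RationalMap) (W : Set ℂ∞) : Prop :=
  IsFatouComponent g W ∧ ∃ p : ℕ, 0 < p ∧ g.toFun^[p] '' W ⊆ W ∧
    ∃ z ∈ W, g.toFun^[p] z = z ∧ IsCriticalPt g.toFun z

/-- An eventually superattracting Fatou component. -/
def IsEventuallySuperattracting (g : RationalMap) (W : Set ℂ∞) : Prop :=
  IsFatouComponent g W ∧ ∃ k : ℕ, ∃ W' : Set ℂ∞,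
    IsSuperattractingComponent g W' ∧ g.toFun^[k] '' W ⊆ W'

/-- The Cui–Peng holomorphic model `(g, V, φ)` of `(f, U)`. -/
def IsHolomorphicModel (f : RationalMap) (U : Set ℂ∞)
    (g : RationalMap) (V : Set ℂ∞) (φ : ℂ∞ → ℂ∞) : Prop :=
  IsFatouComponent g V ∧ g.toFun ⁻¹' V = V ∧
  (∀ z ∈ U, SphereHolomorphicAt φ z) ∧ Set.BijOn φ U V ∧
  (∀ z ∈ U, φ (f.toFun z) = g.toFun (φ z)) ∧
  ∀ C ∈ componentsOf (frontier V), ¬ C.Subsingleton →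
    (∞ : ℂ∞) ∉ C ∧ IsQuasicircle (finitePart C) ∧
    ∃ W : Set ℂ∞, frontier W = C ∧ IsEventuallySuperattracting g W ∧
      (W ∩ postcriticalSet g.toFun).Subsingleton

/-- `γ` separates `E` from `∞`. -/
def SeparatesFromInfty (γ E : Set ℂ∞) : Prop :=
  E ∩ γ = ∅ ∧ (∞ : ℂ∞) ∉ γ ∧ ∀ z ∈ E, (∞ : ℂ∞) ∉ connectedComponentIn γᶜ z

/-- The data of the puzzle construction: a Jordan domain `U₀ ∋ ∞` compactly contained
in its preimage, whose boundary avoids the postcritical set of `f` in `U`, absorbing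
all compact subsets of `U`. -/
structure PuzzleData (f : RationalMap) (U : Set ℂ∞) where
  U0 : Set ℂ∞
  isOpen' : IsOpen U0
  isConnected' : IsConnected U0
  subset : U0 ⊆ U
  infty_mem : (∞ : ℂ∞) ∈ U0
  infty_not_bd : (∞ : ℂ∞) ∉ frontier U0
  jordan_bd : IsJordanCurve (finitePart (frontier U0))
  closure_subset : closure U0 ⊆ f.toFun ⁻¹' U0
  bd_avoids_pc : frontier U0 ∩
    closure (⋃ n : ℕ, f.toFun^[n + 1] '' {z | z ∈ U ∧ IsCriticalPt f.toFun z}) = ∅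
  absorbing : ∀ K : Set ℂ∞, IsCompact K → K ⊆ U → ∃ k : ℕ, f.toFun^[k] '' K ⊆ U0

/-- `U_n`: the connected component of `f^{-n}(U₀)` containing `U₀` (equivalently, `∞`). -/
def PuzzleData.Un {f : RationalMap} {U : Set ℂ∞} (D : PuzzleData f U) (n : ℕ) : Set ℂ∞ :=
  connectedComponentIn (f.toFun^[n] ⁻¹' D.U0) ∞

/-- `γ` is the curve `γ_n(E)`: the component of `∂U_n` separating `E` from `∞`. -/
def PuzzleData.IsCurveFor {f : RationalMap} {U : Set ℂ∞} (D : PuzzleData f U)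
    (n : ℕ) (E γ : Set ℂ∞) : Prop :=
  γ ∈ componentsOf (frontier (D.Un n)) ∧ SeparatesFromInfty γ E

/-- `P` is a puzzle piece of depth `n`: a complementary component, not containing `∞`,
of some component `γ` of `∂U_n`. -/
def PuzzleData.IsPiece {f : RationalMap} {U : Set ℂ∞} (D : PuzzleData f U)
    (n : ℕ) (P : Set ℂ∞) : Prop :=
  ∃ γ ∈ componentsOf (frontier (D.Un n)), P ∈ componentsOf γᶜ ∧ (∞ : ℂ∞) ∉ P

/-- `P` is the puzzle piece `P(γ_n(E))` of depth `n` around the Julia component `E`. -/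
def PuzzleData.IsPieceFor {f : RationalMap} {U : Set ℂ∞} (D : PuzzleData f U)
    (n : ℕ) (E P : Set ℂ∞) : Prop :=
  ∃ γ : Set ℂ∞, D.IsCurveFor n E γ ∧ P ∈ componentsOf γᶜ ∧ (∞ : ℂ∞) ∉ P ∧ E ⊆ P

/-- `P` is the puzzle piece `I(β_n(Q))` of depth `n` of the model domain `V = φ(U)`
around the Julia component `Q` of `g`: the bounded complementary component, containing
`Q`, of the component `β_n(Q)` of `∂V_n = ∂(φ(U_n))`. -/
def PuzzleData.IsVPieceFor {f : RationalMap} {U : Set ℂ∞} (D : PuzzleData f U)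
    (φ : ℂ∞ → ℂ∞) (n : ℕ) (Q P : Set ℂ∞) : Prop :=
  ∃ β ∈ componentsOf (frontier (φ '' D.Un n)), P ∈ componentsOf βᶜ ∧ (∞ : ℂ∞) ∉ P ∧ Q ⊆ P

@[simp] lemma sphDown_coe (w : ℂ) : sphDown (w : ℂ∞) = w := rfl
@[simp] lemma sphDown_infty : sphDown (∞ : ℂ∞) = 0 := rfl
@[simp] lemma sphereInv_infty : sphereInv (∞ : ℂ∞) = ((0 : ℂ) : ℂ∞) := rfl
lemma sphereInv_coe (w : ℂ) : sphereInv (w : ℂ∞) = if w = 0 then ∞ else ((w⁻¹ : ℂ) : ℂ∞) := rfl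
@[simp] lemma sphereInv_coe_zero : sphereInv ((0 : ℂ) : ℂ∞) = ∞ := by
  simp [sphereInv_coe]
lemma sphereInv_coe_ne (w : ℂ) (hw : w ≠ 0) : sphereInv (w : ℂ∞) = ((w⁻¹ : ℂ) : ℂ∞) := by
  simp [sphereInv_coe, hw]

@[simp] lemma sphereInv_sphereInv (z : ℂ∞) : sphereInv (sphereInv z) = z := by
  induction z using OnePoint.rec with
  | infty => simp
  | coe w =>
    by_cases hw : w = 0
    · subst hw; simp
    · rw [sphereInv_coe_ne w hw, sphereInv_coe_ne _ (inv_ne_zero hw), inv_inv]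

lemma continuous_sphereInv : Continuous sphereInv := by
  rw [continuous_iff_continuousAt]
  intro z
  induction z using OnePoint.rec with
  | infty =>
    rw [OnePoint.continuousAt_infty']
    rw [Filter.coclosedCompact_eq_cocompact]
    have h0 : ∀ᶠ w : ℂ in cocompact ℂ, ((w⁻¹ : ℂ) : ℂ∞) = sphereInv (w : ℂ∞) := by
      have hm : ({(0 : ℂ)}ᶜ : Set ℂ) ∈ cocompact ℂ :=
        isCompact_singleton.compl_mem_cocompact
      filter_upwards [hm] with w hw
      exact (sphereInv_coe_ne w hw).symm
    rw [show (sphereInv ∘ (fun w : ℂ => (w : ℂ∞))) = fun w : ℂ => sphereInv (w : ℂ∞) from rfl]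
    refine Tendsto.congr' h0 ?_
    have h1 : Tendsto (fun w : ℂ => w⁻¹) (cocompact ℂ) (𝓝 0) := by
      rw [← cobounded_eq_cocompact]; exact tendsto_inv₀_cobounded
    exact ((OnePoint.continuous_coe (X := ℂ)).tendsto (0 : ℂ)).comp h1
  | coe w =>
    rw [OnePoint.continuousAt_coe]
    by_cases hw : w = 0
    · subst hw
      have : Tendsto (fun u : ℂ => sphereInv (u : ℂ∞)) (𝓝 0) (𝓝 (∞ : ℂ∞)) := by
        rw [← nhdsNE_sup_pure (0 : ℂ)]
        rw [tendsto_sup]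
        constructor
        · have h2 : Tendsto (fun u : ℂ => ((u⁻¹ : ℂ) : ℂ∞)) (𝓝[≠] (0 : ℂ)) (𝓝 (∞ : ℂ∞)) := by
            have hi : Tendsto (fun u : ℂ => u⁻¹) (𝓝[≠] (0 : ℂ)) (cobounded ℂ) :=
              tendsto_inv₀_nhdsNE_zero
            have hc : Tendsto (fun v : ℂ => (v : ℂ∞)) (cobounded ℂ) (𝓝 (∞ : ℂ∞)) := by
              rw [cobounded_eq_cocompact, ← Filter.coclosedCompact_eq_cocompact]
              rw [OnePoint.nhds_infty_eq]
              exact Tendsto.mono_right tendsto_map le_sup_left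
            exact hc.comp hi
          refine Tendsto.congr' ?_ h2
          filter_upwards [self_mem_nhdsWithin] with u hu
          exact (sphereInv_coe_ne u hu).symm
        · simpa using tendsto_pure_nhds (fun u : ℂ => sphereInv (u : ℂ∞)) (0 : ℂ)
      simpa [ContinuousAt, Function.comp_def] using this
    · have key : ∀ᶠ u : ℂ in 𝓝 w, ((u⁻¹ : ℂ) : ℂ∞) = sphereInv (u : ℂ∞) := by
        filter_upwards [isOpen_compl_singleton.mem_nhds hw] with u hu
        exact (sphereInv_coe_ne u hu).symm
      have h3 : ContinuousAt (fun u : ℂ => ((u⁻¹ : ℂ) : ℂ∞)) w :=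
        (OnePoint.continuous_coe (X := ℂ)).continuousAt.comp (continuousAt_inv₀ hw)
      have := h3.congr (key.mono (fun u hu => hu))
      rwa [Function.comp_def]

/-- sphereInv as a homeomorphism. -/
def sphereInvHomeo : ℂ∞ ≃ₜ ℂ∞ where
  toFun := sphereInv
  invFun := sphereInv
  left_inv := sphereInv_sphereInv
  right_inv := sphereInv_sphereInv
  continuous_toFun := continuous_sphereInv
  continuous_invFun := continuous_sphereInv

/-- The point excluded from the chart at `c`. -/
def badPt (c : ℂ∞) : ℂ∞ := if c = ∞ then ((0 : ℂ) : ℂ∞) else ∞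

def chartDom (c : ℂ∞) : Set ℂ∞ := {badPt c}ᶜ

lemma isOpen_chartDom (c : ℂ∞) : IsOpen (chartDom c) := isOpen_compl_singleton

lemma self_ne_badPt (c : ℂ∞) : c ≠ badPt c := by
  unfold badPt
  split_ifs with h
  · subst h; exact (OnePoint.infty_ne_coe _)
  · exact h

lemma mem_chartDom_self (c : ℂ∞) : c ∈ chartDom c := self_ne_badPt c

lemma sphereInv_eq_infty_iff {y : ℂ∞} : sphereInv y = ∞ ↔ y = ((0 : ℂ) : ℂ∞) := by
  constructor
  · intro h
    have := congrArg sphereInv h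
    rwa [sphereInv_sphereInv, sphereInv_infty] at this
  · intro h; subst h; simp

lemma readAt_patchAt (c : ℂ∞) (w : ℂ) : readAt c (patchAt c w) = w := by
  unfold readAt patchAt
  split_ifs with h
  · simp
  · simp

lemma patchAt_readAt (c : ℂ∞) {y : ℂ∞} (hy : y ≠ badPt c) : patchAt c (readAt c y) = y := by
  unfold readAt patchAt badPt at *
  split_ifs with h
  · simp only [h, if_pos] at hy
    have h1 : sphereInv y ≠ ∞ := fun h2 => hy (sphereInv_eq_infty_iff.mp h2)
    obtain ⟨v, hv⟩ := OnePoint.ne_infty_iff_exists.mp h1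
    show sphereInv ((sphDown (sphereInv y) : ℂ) : ℂ∞) = y
    rw [← hv, sphDown_coe, hv, sphereInv_sphereInv]
  · simp only [h, if_neg] at hy
    obtain ⟨v, hv⟩ := OnePoint.ne_infty_iff_exists.mp hy
    show ((sphDown y : ℂ) : ℂ∞) = y
    rw [← hv, sphDown_coe]

lemma readAt_self (c : ℂ∞) : readAt c c = coordAt c := by
  unfold readAt coordAt
  split_ifs with h
  · subst h; simp
  · rfl

lemma patchAt_coordAt (c : ℂ∞) : patchAt c (coordAt c) = c := by
  rw [← readAt_self, patchAt_readAt c (self_ne_badPt c)]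

lemma injOn_readAt (c : ℂ∞) : InjOn (readAt c) (chartDom c) := by
  intro x hx y hy hxy
  rw [← patchAt_readAt c hx, ← patchAt_readAt c hy, hxy]

lemma isOpenEmbedding_patchAt (c : ℂ∞) : IsOpenEmbedding (patchAt c) := by
  unfold patchAt
  split_ifs with h
  · exact sphereInvHomeo.isOpenEmbedding.comp OnePoint.isOpenEmbedding_coe
  · exact OnePoint.isOpenEmbedding_coe

lemma continuous_patchAt (c : ℂ∞) : Continuous (patchAt c) :=
  (isOpenEmbedding_patchAt c).continuous

lemma map_nhds_patchAt (c : ℂ∞) (w : ℂ) :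
    map (patchAt c) (𝓝 w) = 𝓝 (patchAt c w) :=
  (isOpenEmbedding_patchAt c).map_nhds_eq w

lemma continuousAt_sphDown {z : ℂ∞} (hz : z ≠ ∞) : ContinuousAt sphDown z := by
  induction z using OnePoint.rec with
  | infty => exact absurd rfl hz
  | coe v =>
    rw [OnePoint.continuousAt_coe]
    exact continuousAt_id.congr (Eventually.of_forall fun u => rfl)

lemma continuousAt_readAt (c : ℂ∞) {y : ℂ∞} (hy : y ≠ badPt c) :
    ContinuousAt (readAt c) y := by
  unfold readAt badPt at *
  split_ifs with h
  · simp only [h, if_pos] at hy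
    have h1 : sphereInv y ≠ ∞ := fun h2 => hy (sphereInv_eq_infty_iff.mp h2)
    exact (continuousAt_sphDown h1).comp continuous_sphereInv.continuousAt
  · simp only [h, if_neg] at hy
    exact continuousAt_sphDown hy

instance : ConnectedSpace ℂ∞ where
  isPreconnected_univ := by
    have h1 : IsPreconnected (range ((↑) : ℂ → ℂ∞)) := by
      rw [← image_univ]
      exact isPreconnected_univ.image _ OnePoint.continuous_coe.continuousOn
    have h2 := h1.closure
    rwa [OnePoint.denseRange_coe.closure_eq] at h2
  toNonempty := ⟨∞⟩

instance : Infinite ℂ∞ := Infinite.of_injective _ OnePoint.coe_injective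

lemma Filter.mem_coclosedCompact {X : Type*} [TopologicalSpace X] {s : Set X} :
    s ∈ coclosedCompact X ↔ ∃ t, IsClosed t ∧ IsCompact t ∧ tᶜ ⊆ s := by
  rw [Filter.hasBasis_coclosedCompact.mem_iff]; simp only [and_assoc]

lemma isPreconnected_infty_nbhd {R : ℝ} (hR : 0 ≤ R) :
    IsPreconnected ({(∞ : ℂ∞)} ∪ (fun z : ℂ => (z : ℂ∞)) '' {z : ℂ | R < ‖z‖}) := by
  have hray : ∀ w : ℂ, ‖w‖ = 1 → IsPreconnected
      ({(∞ : ℂ∞)} ∪ (fun z : ℂ => (z : ℂ∞)) '' ((fun t : ℝ => (t : ℂ) * w) '' Ioi R)) := by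
    intro w hw
    set S : Set ℂ∞ := (fun z : ℂ => (z : ℂ∞)) '' ((fun t : ℝ => (t : ℂ) * w) '' Ioi R) with hS
    have hSpre : IsPreconnected S := by
      have h1 : IsPreconnected ((fun t : ℝ => (t : ℂ) * w) '' Ioi R) :=
        (isPreconnected_Ioi).image _
          (Continuous.continuousOn (by continuity))
      exact h1.image _ OnePoint.continuous_coe.continuousOn
    have hinf : (∞ : ℂ∞) ∈ closure S := by
      rw [mem_closure_iff_nhds]
      intro U hU
      rw [OnePoint.nhds_infty_eq, mem_sup] at hU
      obtain ⟨hU1, _⟩ := hU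
      rw [mem_map, Filter.mem_coclosedCompact] at hU1
      obtain ⟨K, _, hKcomp, hKsub⟩ := hU1
      obtain ⟨r, hr⟩ := hKcomp.isBounded.subset_closedBall 0
      set t : ℝ := max (R + 1) (r + 1) with ht
      refine ⟨((t : ℂ) * w : ℂ), ?_, ?_⟩
      · apply hKsub
        intro hmem
        have := hr hmem
        rw [mem_closedBall, dist_zero_right] at this
        have htpos : (0:ℝ) < t :=
          lt_of_lt_of_le (by linarith) (le_max_left (R+1) (r+1))
        have h2 : ‖(t : ℂ) * w‖ = t := by
          rw [norm_mul, hw, mul_one, Complex.norm_real, Real.norm_eq_abs, abs_of_pos htpos]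
        rw [h2] at this
        have : r + 1 ≤ r := le_trans (le_max_right (R + 1) (r + 1)) this
        linarith
      · exact ⟨(t : ℂ) * w, ⟨t, by
          simp only [mem_Ioi]
          exact lt_of_lt_of_le (by linarith) (le_max_left (R+1) (r+1)), rfl⟩, rfl⟩
    have : {(∞ : ℂ∞)} ∪ S ⊆ closure S := by
      rintro x (hx | hx)
      · rw [mem_singleton_iff] at hx; subst hx; exact hinf
      · exact subset_closure hx
    exact hSpre.subset_closure subset_union_right this
  have hunion : {(∞ : ℂ∞)} ∪ (fun z : ℂ => (z : ℂ∞)) '' {z : ℂ | R < ‖z‖} =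
      ⋃₀ {L | ∃ w : ℂ, ‖w‖ = 1 ∧
        L = {(∞ : ℂ∞)} ∪ (fun z : ℂ => (z : ℂ∞)) '' ((fun t : ℝ => (t : ℂ) * w) '' Ioi R)} := by
    apply Subset.antisymm
    · rintro x (hx | ⟨z, hz, rfl⟩)
      · rw [mem_singleton_iff] at hx; subst hx
        exact ⟨_, ⟨1, by simp, rfl⟩, Or.inl rfl⟩
      · have hz0 : z ≠ 0 := by
          intro h; rw [h] at hz; simp at hz; linarith [mem_setOf.mp hz]
        have hnz : (0:ℝ) < ‖z‖ := norm_pos_iff.mpr hz0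
        refine ⟨_, ⟨(↑‖z‖)⁻¹ * z, ?_, rfl⟩, Or.inr ⟨z, ⟨‖z‖, mem_setOf.mp hz, ?_⟩, rfl⟩⟩
        · rw [norm_mul, norm_inv, Complex.norm_real, Real.norm_eq_abs, abs_of_pos hnz,
            inv_mul_cancel₀ (ne_of_gt hnz)]
        · show ((‖z‖ : ℂ)) * ((↑‖z‖)⁻¹ * z) = z
          rw [← mul_assoc, mul_inv_cancel₀ (by exact_mod_cast ne_of_gt hnz), one_mul]
    · rintro x ⟨L, ⟨w, hw, rfl⟩, hx⟩
      rcases hx with hx | ⟨z, ⟨t, ht, rfl⟩, rfl⟩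
      · exact Or.inl hx
      · refine Or.inr ⟨(t : ℂ) * w, ?_, rfl⟩
        rw [mem_setOf, norm_mul, hw, mul_one, Complex.norm_real, Real.norm_eq_abs,
          abs_of_pos (lt_of_le_of_lt hR (mem_Ioi.mp ht))]
        exact mem_Ioi.mp ht
  rw [hunion]
  apply isPreconnected_sUnion (∞ : ℂ∞)
  · rintro L ⟨w, hw, rfl⟩; exact Or.inl rfl
  · rintro L ⟨w, hw, rfl⟩; exact hray w hw

instance : LocallyConnectedSpace ℂ∞ := by
  rw [locallyConnectedSpace_iff_connected_subsets]
  intro x U hU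
  induction x using OnePoint.rec with
  | infty =>
    rw [OnePoint.nhds_infty_eq, mem_sup] at hU
    obtain ⟨hU1, hU2⟩ := hU
    rw [mem_map, Filter.mem_coclosedCompact] at hU1
    obtain ⟨K, _, hKcomp, hKsub⟩ := hU1
    obtain ⟨r, hr⟩ := hKcomp.isBounded.subset_closedBall 0
    set R : ℝ := max r 0 with hRdef
    refine ⟨{(∞ : ℂ∞)} ∪ (fun z : ℂ => (z : ℂ∞)) '' {z : ℂ | R < ‖z‖}, ?_, ?_, ?_⟩
    · rw [OnePoint.nhds_infty_eq, mem_sup]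
      constructor
      · rw [mem_map, Filter.mem_coclosedCompact]
        refine ⟨closedBall 0 R, Metric.isClosed_closedBall, isCompact_closedBall 0 R, ?_⟩
        intro z hz
        simp only [mem_compl_iff, mem_closedBall, dist_zero_right, not_le] at hz
        exact mem_preimage.mpr (Or.inr ⟨z, hz, rfl⟩)
      · exact mem_pure.mpr (Or.inl rfl)
    · exact isPreconnected_infty_nbhd (le_max_right r 0)
    · rintro x (hx | ⟨z, hz, rfl⟩)
      · rw [mem_singleton_iff] at hx; subst hx; exact mem_pure.mp hU2
      · apply hKsub
        intro hmem
        have := hr hmem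
        rw [mem_closedBall, dist_zero_right] at this
        exact absurd (lt_of_le_of_lt (le_max_left r 0) (mem_setOf.mp hz)) (not_lt.mpr this)
  | coe x =>
    rw [OnePoint.nhds_coe_eq, mem_map] at hU
    obtain ⟨V₀, hV₀, hV₀p, hV₀sub⟩ :=
      locallyConnectedSpace_iff_connected_subsets.mp inferInstance x _ hU
    refine ⟨(fun z : ℂ => (z : ℂ∞)) '' V₀, ?_, hV₀p.image _ OnePoint.continuous_coe.continuousOn, ?_⟩
    · rw [OnePoint.nhds_coe_eq]
      exact image_mem_map hV₀
    · rintro y ⟨z, hz, rfl⟩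
      exact hV₀sub hz

section Machine

variable {F : ℂ∞ → ℂ∞}

/-- The map `F` read in the chart at `ζ`. -/
def chartRead (F : ℂ∞ → ℂ∞) (ζ : ℂ∞) : ℂ → ℂ :=
  fun w : ℂ => readAt (F ζ) (F (patchAt ζ w))

lemma sphereHolomorphicAt_iff {z : ℂ∞} :
    SphereHolomorphicAt F z ↔ ContinuousAt F z ∧ AnalyticAt ℂ (chartRead F z) (coordAt z) :=
  Iff.rfl

lemma chartRead_coordAt (F : ℂ∞ → ℂ∞) (ζ : ℂ∞) :
    chartRead F ζ (coordAt ζ) = coordAt (F ζ) := by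
  rw [chartRead, patchAt_coordAt, readAt_self]

lemma chartRead_readAt {ζ x : ℂ∞} (hx : x ≠ badPt ζ) :
    chartRead F ζ (readAt ζ x) = readAt (F ζ) (F x) := by
  rw [chartRead, patchAt_readAt ζ hx]

/-- Non-local-injectivity forces the chart derivative to vanish. -/
lemma deriv_chartRead_eq_zero_of_critical {ζ x : ℂ∞}
    (hFc : ContinuousAt F x)
    (hx : x ≠ badPt ζ)
    (han : AnalyticAt ℂ (chartRead F ζ) (readAt ζ x))
    (hcrit : IsCriticalPt F x) : deriv (chartRead F ζ) (readAt ζ x) = 0 := by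
  by_contra hne
  set w₀ := readAt ζ x with hw₀
  obtain ⟨p, hp⟩ := han
  have hs0 := hp.hasStrictDerivAt
  have hd : deriv (chartRead F ζ) w₀ = ((p 1) fun _ => 1) := hs0.hasDerivAt.deriv
  rw [← hd] at hs0
  have hE := hs0.hasStrictFDerivAt_equiv hne
  have hinjE := hE.eventually_left_inverse
  obtain ⟨s, hs_mem, hs_inj⟩ : ∃ s ∈ 𝓝 w₀, ∀ u ∈ s,
      hE.localInverse _ _ _ (chartRead F ζ u) = u := by
    rcases hinjE.exists_mem with ⟨s, hs1, hs2⟩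
    exact ⟨s, hs1, hs2⟩
  set S : Set ℂ∞ := (patchAt ζ '' s) ∩ F ⁻¹' (chartDom (F x)) with hSdef
  have hS_nhds : S ∈ 𝓝 x := by
    apply Filter.inter_mem
    · have h1 : patchAt ζ '' s ∈ map (patchAt ζ) (𝓝 w₀) := image_mem_map hs_mem
      rwa [map_nhds_patchAt, hw₀, patchAt_readAt ζ hx] at h1
    · exact hFc.preimage_mem_nhds
        ((isOpen_chartDom (F x)).mem_nhds (mem_chartDom_self (F x)))
  refine hcrit S hS_nhds ?_
  rintro x₁ ⟨⟨u₁, hu₁, rfl⟩, hFx₁⟩ x₂ ⟨⟨u₂, hu₂, rfl⟩, hFx₂⟩ hFeq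
  have hcr : chartRead F ζ u₁ = chartRead F ζ u₂ := by
    unfold chartRead
    rw [hFeq]
  have := hs_inj u₁ hu₁
  rw [hcr, hs_inj u₂ hu₂] at this
  rw [this]

/-- Local constancy of `F` forces the chart derivative to vanish. -/
lemma deriv_chartRead_eq_zero_of_locallyConst {ζ x : ℂ∞} (hx : x ≠ badPt ζ)
    (hconst : ∀ᶠ y in 𝓝 x, F y = F x) : deriv (chartRead F ζ) (readAt ζ x) = 0 := by
  have hp : Tendsto (patchAt ζ) (𝓝 (readAt ζ x)) (𝓝 x) := by
    have h1 : ContinuousAt (patchAt ζ) (readAt ζ x) := (continuous_patchAt ζ).continuousAt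
    rwa [ContinuousAt, patchAt_readAt ζ hx] at h1
  have hev : ∀ᶠ w in 𝓝 (readAt ζ x), chartRead F ζ w = chartRead F ζ (readAt ζ x) := by
    filter_upwards [hp.eventually hconst] with w hw
    unfold chartRead
    rw [hw, patchAt_readAt ζ hx]
  have h2 : deriv (chartRead F ζ) (readAt ζ x) =
      deriv (fun _ : ℂ => chartRead F ζ (readAt ζ x)) (readAt ζ x) :=
    Filter.EventuallyEq.deriv_eq hev
  rw [h2, deriv_const]

/-- If the chart read of `F` is locally constant at `ζ`'s coordinate, then `F` is
locally constant at `ζ`. -/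
lemma locallyConst_of_chartRead_const {ζ : ℂ∞} (hFc : ContinuousAt F ζ)
    (h : ∀ᶠ w in 𝓝 (coordAt ζ), chartRead F ζ w = chartRead F ζ (coordAt ζ)) :
    ∀ᶠ x in 𝓝 ζ, F x = F ζ := by
  have hread : Tendsto (readAt ζ) (𝓝 ζ) (𝓝 (coordAt ζ)) := by
    have h1 := continuousAt_readAt ζ (self_ne_badPt ζ)
    rwa [ContinuousAt, readAt_self] at h1
  filter_upwards [hread.eventually h,
    (isOpen_chartDom ζ).mem_nhds (mem_chartDom_self ζ),
    hFc.preimage_mem_nhds ((isOpen_chartDom (F ζ)).mem_nhds (mem_chartDom_self (F ζ)))]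
    with x hx hdom hFdom
  have h1 : chartRead F ζ (readAt ζ x) = readAt (F ζ) (F x) := chartRead_readAt hdom
  rw [h1, chartRead_coordAt, ← readAt_self] at hx
  exact injOn_readAt (F ζ) hFdom (mem_chartDom_self (F ζ)) hx

/-- If the chart derivative vanishes frequently near `ζ`, then `F` is locally
constant at `ζ`. -/
lemma locallyConst_of_frequently_deriv_zero {ζ : ℂ∞} (hFc : ContinuousAt F ζ)
    (han : AnalyticAt ℂ (chartRead F ζ) (coordAt ζ))
    (h : ∃ᶠ w in 𝓝[≠] (coordAt ζ), deriv (chartRead F ζ) w = 0) :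
    ∀ᶠ x in 𝓝 ζ, F x = F ζ := by
  have hda : AnalyticAt ℂ (deriv (chartRead F ζ)) (coordAt ζ) := by
    obtain ⟨s, hsub, hso, hmem⟩ := _root_.eventually_nhds_iff.mp han.eventually_analyticAt
    exact (AnalyticOnNhd.deriv_of_isOpen (fun y hy => hsub y hy) hso) _ hmem
  have hev0 : ∀ᶠ w in 𝓝 (coordAt ζ), deriv (chartRead F ζ) w = 0 :=
    hda.frequently_zero_iff_eventually_zero.mp h
  have hev : ∀ᶠ w in 𝓝 (coordAt ζ),
      deriv (chartRead F ζ) w = 0 ∧ AnalyticAt ℂ (chartRead F ζ) w :=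
    hev0.and han.eventually_analyticAt
  obtain ⟨r, hr0, hball⟩ := Metric.eventually_nhds_iff_ball.mp hev
  have hconst : ∀ w ∈ ball (coordAt ζ) r, chartRead F ζ w = chartRead F ζ (coordAt ζ) := by
    intro w hw
    refine (convex_ball (coordAt ζ) r).is_const_of_fderivWithin_eq_zero
      (fun y hy => ((hball y hy).2.differentiableAt).differentiableWithinAt) ?_
      hw (mem_ball_self hr0)
    intro y hy
    rw [fderivWithin_of_isOpen isOpen_ball hy]
    have hdiff := (hball y hy).2.differentiableAt
    have h1 : HasDerivAt (chartRead F ζ) 0 y := by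
      have := hdiff.hasDerivAt
      rwa [(hball y hy).1] at this
    have h2 := hasDerivAt_iff_hasFDerivAt.mp h1
    have h3 := h2.fderiv
    rw [h3]
    ext u
    simp
  exact locallyConst_of_chartRead_const hFc
    (Metric.eventually_nhds_iff_ball.mpr ⟨r, hr0, fun w hw => hconst w hw⟩)

end Machine

section Machine2

variable {F : ℂ∞ → ℂ∞}

lemma tendsto_readAt_punctured (ζ : ℂ∞) :
    Tendsto (readAt ζ) (𝓝[{ζ}ᶜ ∩ chartDom ζ] ζ) (𝓝[≠] (coordAt ζ)) := by
  rw [tendsto_nhdsWithin_iff]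
  constructor
  · have h1 := continuousAt_readAt ζ (self_ne_badPt ζ)
    rw [ContinuousAt, readAt_self] at h1
    exact h1.mono_left nhdsWithin_le_nhds
  · filter_upwards [self_mem_nhdsWithin] with x hx
    intro hcontra
    rw [mem_singleton_iff] at hcontra
    rw [← readAt_self] at hcontra
    exact hx.1 (injOn_readAt ζ hx.2 (mem_chartDom_self ζ) hcontra)

lemma frequently_deriv_zero_transfer {ζ : ℂ∞}
    (h : ∃ᶠ x in 𝓝[≠] ζ, x ∈ chartDom ζ ∧ deriv (chartRead F ζ) (readAt ζ x) = 0) :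
    ∃ᶠ w in 𝓝[≠] (coordAt ζ), deriv (chartRead F ζ) w = 0 := by
  have hrw : 𝓝[≠] ζ = 𝓝[{ζ}ᶜ ∩ chartDom ζ] ζ :=
    nhdsWithin_restrict' _ ((isOpen_chartDom ζ).mem_nhds (mem_chartDom_self ζ))
  rw [hrw] at h
  exact (tendsto_readAt_punctured ζ).frequently (h.mono fun x hx => hx.2)

lemma eq_const_of_locallyConst (hol : ∀ z, SphereHolomorphicAt F z) {ζ₀ : ℂ∞}
    (h0 : ∀ᶠ x in 𝓝 ζ₀, F x = F ζ₀) : ∀ x, F x = F ζ₀ := by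
  set A : Set ℂ∞ := {ζ | ∀ᶠ x in 𝓝 ζ, F x = F ζ} with hA
  have hopen : IsOpen A := by
    rw [isOpen_iff_mem_nhds]
    intro ζ hζ
    obtain ⟨s, hsub, hso, hmem⟩ := _root_.eventually_nhds_iff.mp hζ
    apply mem_of_superset (hso.mem_nhds hmem)
    intro x hxs
    have h1 : ∀ᶠ y in 𝓝 x, F y = F ζ := _root_.eventually_nhds_iff.mpr ⟨s, hsub, hso, hxs⟩
    have h2 : F x = F ζ := hsub x hxs
    filter_upwards [h1] with y hy
    rw [hy, h2]
  have hclosed : IsClosed A := by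
    rw [← isOpen_compl_iff]
    rw [isOpen_iff_mem_nhds]
    by_contra hcon
    push_neg at hcon
    obtain ⟨ζ', hζ'c, hζ'⟩ := hcon
    have hζ'cl : ζ' ∈ closure A := by
      rw [mem_closure_iff_nhds]
      intro U hU
      by_contra hemp
      rw [not_nonempty_iff_eq_empty] at hemp
      apply hζ'
      apply mem_of_superset hU
      intro x hx
      simp only [mem_compl_iff]
      intro hxA
      exact absurd (by exact ⟨hx, hxA⟩ : x ∈ U ∩ A) (hemp ▸ notMem_empty x)
    have hmemA : ζ' ∈ A := by
      have hfreq0 : ∃ᶠ x in 𝓝 ζ', x ∈ A := mem_closure_iff_frequently.mp hζ'cl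
      have hfreq : ∃ᶠ x in 𝓝[≠] ζ', x ∈ A := by
        rw [← nhdsNE_sup_pure ζ'] at hfreq0
        rcases Filter.frequently_sup.mp hfreq0 with h | h
        · exact h
        · rw [Filter.Frequently, Filter.eventually_pure] at h
          exact absurd (not_not.mp h) hζ'c
      have hev : ∀ᶠ x in 𝓝[≠] ζ', x ∈ chartDom ζ' :=
        Filter.Eventually.filter_mono nhdsWithin_le_nhds
          ((isOpen_chartDom ζ').mem_nhds (mem_chartDom_self ζ'))
      have hfreq2 : ∃ᶠ x in 𝓝[≠] ζ', x ∈ chartDom ζ' ∧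
          deriv (chartRead F ζ') (readAt ζ' x) = 0 := by
        refine (hfreq.and_eventually hev).mono ?_
        rintro x ⟨hxA, hxdom⟩
        exact ⟨hxdom, deriv_chartRead_eq_zero_of_locallyConst hxdom hxA⟩
      exact locallyConst_of_frequently_deriv_zero (hol ζ').1 (hol ζ').2
        (frequently_deriv_zero_transfer hfreq2)
    exact hζ'c hmemA
  have hA_univ : A = univ := IsClopen.eq_univ ⟨hclosed, hopen⟩ ⟨ζ₀, h0⟩
  set B : Set ℂ∞ := {x | F x = F ζ₀} with hB
  have hBopen : IsOpen B := by
    rw [isOpen_iff_mem_nhds]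
    intro x hx
    have hxA : x ∈ A := hA_univ ▸ mem_univ x
    filter_upwards [hxA] with y hy
    rw [mem_setOf] at hx ⊢
    rw [hy, hx]
  have hBclosed : IsClosed B := by
    rw [← isOpen_compl_iff]
    rw [isOpen_iff_mem_nhds]
    intro x hx
    have hxA : x ∈ A := hA_univ ▸ mem_univ x
    filter_upwards [hxA] with y hy
    rw [mem_compl_iff, mem_setOf] at hx ⊢
    rw [hy]
    exact hx
  have hB_univ : B = univ := IsClopen.eq_univ ⟨hBclosed, hBopen⟩ ⟨ζ₀, rfl⟩
  intro x
  exact (hB_univ ▸ mem_univ x : x ∈ B)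

end Machine2

namespace RationalMap

variable (g : RationalMap)

lemma continuous : Continuous g.toFun :=
  continuous_iff_continuousAt.mpr fun z => (g.holo z).1

lemma not_locallyConst (ζ : ℂ∞) : ¬ (∀ᶠ x in 𝓝 ζ, g.toFun x = g.toFun ζ) := by
  intro h
  have hconst := eq_const_of_locallyConst g.holo h
  have hsub : ({g.toFun ζ}ᶜ : Set ℂ∞) ⊆ {w | (g.toFun ⁻¹' {w}).ncard ≠ g.deg} := by
    intro w hw
    have hempty : g.toFun ⁻¹' {w} = ∅ := by
      ext x
      simp only [mem_preimage, mem_singleton_iff, mem_empty_iff_false, iff_false]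
      intro hx
      exact hw (by rw [← hx, hconst x]; exact rfl)
    rw [mem_setOf, hempty]
    simp only [Set.ncard_empty]
    have := g.two_le_deg
    omega
  exact (Set.finite_singleton (g.toFun ζ)).infinite_compl (g.generic_fiber.subset hsub)

lemma crit_finite : {z : ℂ∞ | IsCriticalPt g.toFun z}.Finite := by
  by_contra h
  obtain ⟨ζ, hζ0⟩ := Set.Infinite.exists_accPt_principal h
  rw [accPt_iff_frequently] at hζ0
  have hζ : ∃ᶠ x in 𝓝[≠] ζ, x ∈ {z : ℂ∞ | IsCriticalPt g.toFun z} := by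
    rw [frequently_nhdsWithin_iff]
    exact hζ0.mono fun x hx => ⟨hx.2, hx.1⟩
  have htends : Tendsto (readAt ζ) (𝓝 ζ) (𝓝 (coordAt ζ)) := by
    have h1 := continuousAt_readAt ζ (self_ne_badPt ζ)
    rwa [ContinuousAt, readAt_self] at h1
  have hana : ∀ᶠ x in 𝓝 ζ, AnalyticAt ℂ (chartRead g.toFun ζ) (readAt ζ x) :=
    htends.eventually (g.holo ζ).2.eventually_analyticAt
  have hdom : ∀ᶠ x in 𝓝 ζ, x ∈ chartDom ζ :=
    (isOpen_chartDom ζ).eventually_mem (mem_chartDom_self ζ)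
  have hev : ∀ᶠ x in 𝓝[≠] ζ, x ∈ chartDom ζ ∧
      AnalyticAt ℂ (chartRead g.toFun ζ) (readAt ζ x) :=
    Filter.Eventually.filter_mono nhdsWithin_le_nhds (hdom.and hana)
  have hfreq2 : ∃ᶠ x in 𝓝[≠] ζ, x ∈ chartDom ζ ∧
      deriv (chartRead g.toFun ζ) (readAt ζ x) = 0 := by
    refine (hζ.and_eventually hev).mono ?_
    rintro x ⟨hxc, hxdom, hxan⟩
    exact ⟨hxdom, deriv_chartRead_eq_zero_of_critical (g.holo x).1 hxdom hxan hxc⟩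
  exact g.not_locallyConst ζ
    (locallyConst_of_frequently_deriv_zero (g.holo ζ).1 (g.holo ζ).2
      (frequently_deriv_zero_transfer hfreq2))

lemma isOpenMap : IsOpenMap g.toFun := by
  apply IsOpenMap.of_nhds_le
  intro ζ
  have halt := (g.holo ζ).2.eventually_constant_or_nhds_le_map_nhds
  rcases halt with hconst | hle
  · exfalso
    have h1 : ∀ᶠ w in 𝓝 (coordAt ζ), chartRead g.toFun ζ w = chartRead g.toFun ζ (coordAt ζ) :=
      hconst
    exact g.not_locallyConst ζ (locallyConst_of_chartRead_const (g.holo ζ).1 h1)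
  · set F := g.toFun with hF
    set c₀ := coordAt ζ with hc₀
    have key : 𝓝 (F ζ) ≤ map (patchAt (F ζ) ∘ chartRead F ζ) (𝓝 c₀) := by
      have h1 : map (patchAt (F ζ)) (𝓝 (chartRead F ζ c₀)) ≤
          map (patchAt (F ζ)) (map (chartRead F ζ) (𝓝 c₀)) := map_mono hle
      rw [map_nhds_patchAt, Filter.map_map] at h1
      rwa [chartRead_coordAt, patchAt_coordAt] at h1
    have e2 : map (fun w => F (patchAt ζ w)) (𝓝 c₀) = map F (𝓝 ζ) := by
      have he : (fun w => F (patchAt ζ w)) = F ∘ patchAt ζ := rfl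
      rw [he, ← Filter.map_map, map_nhds_patchAt, patchAt_coordAt]
    have h3 : map F (𝓝 ζ) ≤ 𝓝 (F ζ) := (g.holo ζ).1
    have h4 : ∀ᶠ y in map F (𝓝 ζ), patchAt (F ζ) (readAt (F ζ) y) = y := by
      have h5 : chartDom (F ζ) ∈ map F (𝓝 ζ) :=
        h3 ((isOpen_chartDom (F ζ)).mem_nhds (mem_chartDom_self (F ζ)))
      filter_upwards [h5] with y hy
      exact patchAt_readAt (F ζ) hy
    have heq : map (patchAt (F ζ) ∘ chartRead F ζ) (𝓝 c₀) = map F (𝓝 ζ) := by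
      calc map (patchAt (F ζ) ∘ chartRead F ζ) (𝓝 c₀)
          = map (fun y => patchAt (F ζ) (readAt (F ζ) y))
              (map (fun w => F (patchAt ζ w)) (𝓝 c₀)) := by
            rw [Filter.map_map]; rfl
        _ = map (fun y => patchAt (F ζ) (readAt (F ζ) y)) (map F (𝓝 ζ)) := by rw [e2]
        _ = map id (map F (𝓝 ζ)) := Filter.map_congr h4
        _ = map F (𝓝 ζ) := Filter.map_id
    rw [← heq]
    exact key

end RationalMap

lemma isOpen_fatouSet (F : ℂ∞ → ℂ∞) : IsOpen (fatouSet F) :=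
  isOpen_sUnion fun _ hs => hs.1

lemma isClosed_juliaSet (F : ℂ∞ → ℂ∞) : IsClosed (juliaSet F) :=
  (isOpen_fatouSet F).isClosed_compl

namespace RationalMap

variable (g : RationalMap)

lemma preimage_fatou_subset : g.toFun ⁻¹' (fatouSet g.toFun) ⊆ fatouSet g.toFun := by
  intro z hz
  rw [mem_preimage] at hz
  obtain ⟨s, ⟨hso, hse⟩, hzs⟩ := hz
  refine ⟨g.toFun ⁻¹' s, ⟨hso.preimage g.continuous, ?_⟩, hzs⟩
  intro x hx U hU
  have h1 := hse (g.toFun x) hx U hU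
  rw [hso.nhdsWithin_eq hx] at h1
  have h2 : ∀ᶠ y in 𝓝 x, ∀ n, (g.toFun^[n] (g.toFun x), g.toFun^[n] (g.toFun y)) ∈ U :=
    (g.holo x).1.eventually h1
  have h3 : {y : ℂ∞ | (x, y) ∈ U} ∈ 𝓝 x := by have := mem_nhds_left x hU; exact this
  apply Filter.Eventually.filter_mono nhdsWithin_le_nhds
  filter_upwards [h2, h3] with y hy hxy
  intro n
  cases n with
  | zero => simpa using hxy
  | succ n =>
    rw [Function.iterate_succ_apply, Function.iterate_succ_apply]
    exact hy n

lemma julia_forward_invariant {z : ℂ∞} (hz : z ∈ juliaSet g.toFun) :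
    g.toFun z ∈ juliaSet g.toFun := by
  intro hmem
  exact hz (g.preimage_fatou_subset hmem)

lemma image_fatou_subset : g.toFun '' (fatouSet g.toFun) ⊆ fatouSet g.toFun := by
  rintro _ ⟨z, hz, rfl⟩
  obtain ⟨s, ⟨hso, hse⟩, hzs⟩ := hz
  refine ⟨g.toFun '' s, ⟨g.isOpenMap s hso, ?_⟩, ⟨z, hzs, rfl⟩⟩
  rintro _ ⟨x, hx, rfl⟩ U hU
  have h1 := hse x hx U hU
  rw [hso.nhdsWithin_eq hx] at h1
  obtain ⟨N, hN_mem, hN⟩ := h1.exists_mem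
  have h2 : g.toFun '' N ∈ 𝓝 (g.toFun x) := by
    obtain ⟨O, hOsub, hOopen, hOx⟩ := _root_.mem_nhds_iff.mp hN_mem
    exact Filter.mem_of_superset ((g.isOpenMap O hOopen).mem_nhds ⟨x, hOx, rfl⟩)
      (image_mono hOsub)
  apply Filter.Eventually.filter_mono nhdsWithin_le_nhds
  apply Filter.eventually_iff_exists_mem.mpr
  refine ⟨g.toFun '' N, h2, ?_⟩
  rintro _ ⟨y, hy, rfl⟩ n
  have h6 := hN y hy (n + 1)
  simp only [Function.iterate_succ_apply] at h6
  exact h6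

lemma iterate_image_fatou_subset (n : ℕ) :
    g.toFun^[n] '' (fatouSet g.toFun) ⊆ fatouSet g.toFun := by
  induction n with
  | zero => simp
  | succ n ih =>
    rw [Function.iterate_succ', Set.image_comp]
    rintro _ ⟨x, hx, rfl⟩
    exact g.image_fatou_subset ⟨x, ih hx, rfl⟩

end RationalMap

section MainHelpers

lemma isOpenMap_iterate {f : ℂ∞ → ℂ∞} (h : IsOpenMap f) (n : ℕ) : IsOpenMap f^[n] := by
  induction n with
  | zero => exact IsOpenMap.id
  | succ n ih =>
    rw [Function.iterate_succ']
    exact h.comp ih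

lemma iterate_periodic_orbit {F : ℂ∞ → ℂ∞} {ζ : ℂ∞} {q : ℕ} (hfix : F^[q] ζ = ζ)
    (r : ℕ) : F^[r] ζ = F^[r % q] ζ := by
  conv_lhs => rw [← Nat.mod_add_div r q]
  rw [Function.iterate_add_apply, Function.iterate_mul, Function.iterate_fixed hfix]

variable (g : RationalMap)

lemma julia_iterate_subset (Q : Set ℂ∞) (hQ : Q ⊆ juliaSet g.toFun) :
    ∀ m : ℕ, (juliaImage g.toFun)^[m] Q ⊆ juliaSet g.toFun ∧
      g.toFun^[m] '' Q ⊆ (juliaImage g.toFun)^[m] Q := by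
  intro m
  induction m with
  | zero => simpa using hQ
  | succ m ih =>
    obtain ⟨h1, h2⟩ := ih
    constructor
    · rw [Function.iterate_succ_apply']
      exact iUnion₂_subset fun z _ => connectedComponentIn_subset _ _
    · rw [Function.iterate_succ_apply' (juliaImage g.toFun), Function.iterate_succ',
        Set.image_comp]
      rintro _ ⟨z, hz, rfl⟩
      have hzJ : z ∈ juliaSet g.toFun := h1 (h2 hz)
      exact mem_biUnion (h2 hz)
        (mem_connectedComponentIn (g.julia_forward_invariant hzJ))

lemma eq_component_of_good (Q Y : Set ℂ∞) (hQne : Q.Nonempty) (hQJ : Q ⊆ juliaSet g.toFun)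
    (hYne : Y.Nonempty) (hYo : IsOpen Y) (hYpre : IsPreconnected Y)
    (hYF : Y ⊆ fatouSet g.toFun) (hYcl : closure Y ⊆ Y ∪ Q) :
    (∀ y ∈ Y, Y = connectedComponentIn (fatouSet g.toFun) y) ∧
      frontier Y ⊆ Q ∧ (frontier Y).Nonempty := by
  have hYQc : Y ⊆ Qᶜ := fun x hx hxQ => (hQJ hxQ) (hYF hx)
  have hfr : frontier Y ⊆ Q := by
    rw [hYo.frontier_eq]
    rintro x ⟨hx1, hx2⟩
    rcases hYcl hx1 with h | h
    · exact absurd h hx2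
    · exact h
  have hfrne : (frontier Y).Nonempty := by
    by_contra hcon
    rw [not_nonempty_iff_eq_empty, hYo.frontier_eq, diff_eq_empty] at hcon
    have hclopen : IsClopen Y := ⟨isClosed_of_closure_subset hcon, hYo⟩
    rcases isClopen_iff.mp hclopen with h | h
    · exact absurd h (Nonempty.ne_empty hYne)
    · obtain ⟨q, hq⟩ := hQne
      exact hYQc (h ▸ mem_univ q) hq
  refine ⟨?_, hfr, hfrne⟩
  intro y hy
  set D' := connectedComponentIn Qᶜ y with hD'def
  have hYD : Y ⊆ D' := hYpre.subset_connectedComponentIn hy hYQc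
  have hclD : D' ∩ closure Y ⊆ Y := by
    rintro x ⟨hx1, hx2⟩
    rcases hYcl hx2 with h | h
    · exact h
    · exact absurd h (connectedComponentIn_subset _ _ hx1)
  have hD'pre : IsPreconnected D' := isPreconnected_connectedComponentIn
  have hD'cl : D' ⊆ closure Y := by
    by_contra hnot
    rw [not_subset] at hnot
    obtain ⟨x, hxD, hxcl⟩ := hnot
    have hcover : D' ⊆ Y ∪ (closure Y)ᶜ := by
      intro u hu
      by_cases huc : u ∈ closure Y
      · exact Or.inl (hclD ⟨hu, huc⟩)
      · exact Or.inr huc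
    have h1 := hD'pre Y (closure Y)ᶜ hYo isClosed_closure.isOpen_compl hcover
      ⟨y, mem_connectedComponentIn (hYQc hy), hy⟩ ⟨x, hxD, hxcl⟩
    obtain ⟨u, _, hu1, hu2⟩ := h1
    exact hu2 (subset_closure hu1)
  have hD'Y : D' = Y := subset_antisymm (fun x hx => hclD ⟨hx, hD'cl hx⟩) hYD
  have hXD : connectedComponentIn (fatouSet g.toFun) y ⊆ D' := by
    apply IsPreconnected.subset_connectedComponentIn isPreconnected_connectedComponentIn
      (mem_connectedComponentIn (hYF hy))
    intro x hx hxQ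
    exact (hQJ hxQ) (connectedComponentIn_subset _ _ hx)
  exact subset_antisymm (hYpre.subset_connectedComponentIn hy hYF) (hD'Y ▸ hXD)

lemma step_image (p : ℕ) (Q : Set ℂ∞) (hFpQ : g.toFun^[p] '' Q ⊆ Q) (Y : Set ℂ∞)
    (h : Y.Nonempty ∧ IsOpen Y ∧ IsPreconnected Y ∧ Y ⊆ fatouSet g.toFun ∧
      closure Y ⊆ Y ∪ Q) :
    (g.toFun^[p] '' Y).Nonempty ∧ IsOpen (g.toFun^[p] '' Y) ∧
      IsPreconnected (g.toFun^[p] '' Y) ∧ g.toFun^[p] '' Y ⊆ fatouSet g.toFun ∧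
      closure (g.toFun^[p] '' Y) ⊆ (g.toFun^[p] '' Y) ∪ Q := by
  obtain ⟨hne, ho, hpre, hF, hcl⟩ := h
  refine ⟨hne.image _, isOpenMap_iterate g.isOpenMap p _ ho,
    hpre.image _ (g.continuous.iterate p).continuousOn, ?_, ?_⟩
  · rintro _ ⟨z, hz, rfl⟩
    exact g.iterate_image_fatou_subset p ⟨z, hF hz, rfl⟩
  · have hK : IsCompact (closure Y) := isClosed_closure.isCompact
    have hKim : IsCompact (g.toFun^[p] '' closure Y) := hK.image (g.continuous.iterate p)
    have h1 : closure (g.toFun^[p] '' Y) ⊆ g.toFun^[p] '' closure Y :=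
      closure_minimal (image_mono subset_closure) hKim.isClosed
    refine h1.trans ?_
    rintro _ ⟨z, hz, rfl⟩
    rcases hcl hz with h | h
    · exact Or.inl ⟨z, h, rfl⟩
    · exact Or.inr (hFpQ ⟨z, h, rfl⟩)

end MainHelpers

/-- A rational map with a completely invariant Fatou domain all of whose non-trivial
Julia components are quasicircles bounding eventually superattracting Fatou domains
has only finitely many non-trivial periodic Julia components. -/
theorem finitely_many_nontrivial_periodic_julia_components
    (g : RationalMap) (V : Set ℂ∞)
    (hV : IsFatouComponent g V)
    (hinv : g.toFun ⁻¹' V = V)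
    (hqc : ∀ Q : Set ℂ∞, IsJuliaComponent g Q → ¬ Q.Subsingleton →
      (∞ : ℂ∞) ∉ Q ∧ IsQuasicircle (finitePart Q) ∧
      ∃ W : Set ℂ∞, frontier W = Q ∧ IsEventuallySuperattracting g W) :
    {Q : Set ℂ∞ | IsJuliaComponent g Q ∧ ¬ Q.Subsingleton ∧
      ∃ p : ℕ, 0 < p ∧ (juliaImage g.toFun)^[p] Q = Q}.Finite := by
  classical
  set Orb : Set ℂ∞ := ⋃ ζ ∈ {z : ℂ∞ | IsCriticalPt g.toFun z},
      {x : ℂ∞ | (∃ q : ℕ, 0 < q ∧ g.toFun^[q] ζ = ζ) ∧ ∃ r : ℕ, x = g.toFun^[r] ζ} with hOrb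
  have hOrbFin : Orb.Finite := by
    refine Set.Finite.biUnion g.crit_finite ?_
    intro ζ hζ
    by_cases hper : ∃ q : ℕ, 0 < q ∧ g.toFun^[q] ζ = ζ
    · obtain ⟨q, hq0, hqfix⟩ := hper
      refine Set.Finite.subset ((Set.finite_Iio q).image (fun r : ℕ => g.toFun^[r] ζ)) ?_
      rintro x ⟨_, r, rfl⟩
      exact ⟨r % q, Nat.mod_lt r hq0, (iterate_periodic_orbit hqfix r).symm⟩
    · have hempty : {x : ℂ∞ | (∃ q : ℕ, 0 < q ∧ g.toFun^[q] ζ = ζ) ∧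
          ∃ r : ℕ, x = g.toFun^[r] ζ} = ∅ := by
        rw [eq_empty_iff_forall_notMem]
        rintro x ⟨hp, _⟩
        exact hper hp
      rw [hempty]
      exact Set.finite_empty
  set 𝒳 : Set (Set ℂ∞) := (fun x => connectedComponentIn (fatouSet g.toFun) x) '' Orb with h𝒳
  have h𝒳fin : 𝒳.Finite := hOrbFin.image _
  have hsub : {Q : Set ℂ∞ | IsJuliaComponent g Q ∧ ¬ Q.Subsingleton ∧
      ∃ p : ℕ, 0 < p ∧ (juliaImage g.toFun)^[p] Q = Q} ⊆
      ⋃ X ∈ 𝒳, {Q : Set ℂ∞ | IsJuliaComponent g Q ∧ (frontier X).Nonempty ∧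
        frontier X ⊆ Q} := by
    rintro Q ⟨hQcomp, hQns, p, hp0, hper⟩
    obtain ⟨z₀, hz₀J, hQeq⟩ := id hQcomp
    have hQsubJ : Q ⊆ juliaSet g.toFun := hQeq ▸ connectedComponentIn_subset _ _
    have hQne : Q.Nonempty := ⟨z₀, hQeq ▸ mem_connectedComponentIn hz₀J⟩
    obtain ⟨_, _, W, hWfront, hWev⟩ := hqc Q hQcomp hQns
    obtain ⟨hWcomp, k, W', hW'sup, hWk⟩ := hWev
    obtain ⟨hW'comp, p', hp'0, _, z', hz'W', hz'per, hz'crit⟩ := hW'sup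
    have hFpQ : g.toFun^[p] '' Q ⊆ Q := by
      have h1 := (julia_iterate_subset g Q hQsubJ p).2
      rwa [hper] at h1
    obtain ⟨w₀, hw₀F, hWeq⟩ := id hWcomp
    have hw₀W : w₀ ∈ W := hWeq ▸ mem_connectedComponentIn hw₀F
    have hW0 : W.Nonempty ∧ IsOpen W ∧ IsPreconnected W ∧ W ⊆ fatouSet g.toFun ∧
        closure W ⊆ W ∪ Q := by
      refine ⟨⟨w₀, hw₀W⟩, hWeq ▸ (isOpen_fatouSet g.toFun).connectedComponentIn,
        hWeq ▸ isPreconnected_connectedComponentIn,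
        hWeq ▸ connectedComponentIn_subset _ _, ?_⟩
      intro x hx
      by_cases hxW : x ∈ W
      · exact Or.inl hxW
      · exact Or.inr (hWfront ▸ ⟨hx, fun hint => hxW (interior_subset hint)⟩)
    set m := k + 1 with hm
    set n := p * m with hn
    have hkn : k ≤ n := by
      calc k ≤ k + 1 := Nat.le_succ k
        _ ≤ p * (k + 1) := Nat.le_mul_of_pos_left _ hp0
    have hYprop : ∀ j : ℕ, ((g.toFun^[p])^[j] '' W).Nonempty ∧
        IsOpen ((g.toFun^[p])^[j] '' W) ∧ IsPreconnected ((g.toFun^[p])^[j] '' W) ∧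
        (g.toFun^[p])^[j] '' W ⊆ fatouSet g.toFun ∧
        closure ((g.toFun^[p])^[j] '' W) ⊆ ((g.toFun^[p])^[j] '' W) ∪ Q := by
      intro j
      induction j with
      | zero => simpa using hW0
      | succ j ih =>
        have h2 := step_image g p Q hFpQ _ ih
        rw [Function.iterate_succ' (g.toFun^[p]) j, Set.image_comp]
        exact h2
    set Y := g.toFun^[n] '' W with hY
    have hYeq : Y = (g.toFun^[p])^[m] '' W := by rw [hY, hn, Function.iterate_mul]
    have hYall := hYprop m
    rw [← hYeq] at hYall
    obtain ⟨hYne, hYo, hYpre, hYF, hYcl⟩ := hYall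
    obtain ⟨hcomp, hfr, hfrne⟩ :=
      eq_component_of_good g Q Y hQne hQsubJ hYne hYo hYpre hYF hYcl
    have hy₀ : g.toFun^[n] w₀ ∈ Y := ⟨w₀, hw₀W, rfl⟩
    have hYcc : Y = connectedComponentIn (fatouSet g.toFun) (g.toFun^[n] w₀) := hcomp _ hy₀
    obtain ⟨v₀, hv₀F, hW'eq⟩ := id hW'comp
    have hW'pre : IsPreconnected W' := hW'eq ▸ isPreconnected_connectedComponentIn
    have hW'F : W' ⊆ fatouSet g.toFun := hW'eq ▸ connectedComponentIn_subset _ _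
    have hCpre : IsPreconnected (g.toFun^[n - k] '' W') :=
      hW'pre.image _ (g.continuous.iterate _).continuousOn
    have hCF : g.toFun^[n - k] '' W' ⊆ fatouSet g.toFun := by
      rintro _ ⟨z, hz, rfl⟩
      exact g.iterate_image_fatou_subset _ ⟨z, hW'F hz, rfl⟩
    have hy₀C : g.toFun^[n] w₀ ∈ g.toFun^[n - k] '' W' := by
      refine ⟨g.toFun^[k] w₀, hWk ⟨w₀, hw₀W, rfl⟩, ?_⟩
      rw [← Function.iterate_add_apply, Nat.sub_add_cancel hkn]
    have hbC : g.toFun^[n - k] z' ∈ g.toFun^[n - k] '' W' := ⟨z', hz'W', rfl⟩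
    have hCsub : g.toFun^[n - k] '' W' ⊆
        connectedComponentIn (fatouSet g.toFun) (g.toFun^[n] w₀) :=
      hCpre.subset_connectedComponentIn hy₀C hCF
    have hbcc : connectedComponentIn (fatouSet g.toFun) (g.toFun^[n - k] z') =
        connectedComponentIn (fatouSet g.toFun) (g.toFun^[n] w₀) :=
      (connectedComponentIn_eq (hCsub hbC)).symm
    have hbOrb : g.toFun^[n - k] z' ∈ Orb := by
      rw [hOrb]
      exact mem_biUnion hz'crit ⟨⟨p', hp'0, hz'per⟩, ⟨n - k, rfl⟩⟩
    refine mem_biUnion (⟨g.toFun^[n - k] z', hbOrb, rfl⟩ :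
      connectedComponentIn (fatouSet g.toFun) (g.toFun^[n - k] z') ∈ 𝒳) ?_
    have hXY : connectedComponentIn (fatouSet g.toFun) (g.toFun^[n - k] z') = Y := by
      rw [hbcc, ← hYcc]
    rw [hXY]
    exact ⟨hQcomp, hfrne, hfr⟩
  refine Set.Finite.subset (Set.Finite.biUnion h𝒳fin ?_) hsub
  intro X _
  apply Set.Subsingleton.finite
  rintro Q₁ ⟨hQ₁comp, hne₁, hsub₁⟩ Q₂ ⟨hQ₂comp, _, hsub₂⟩
  obtain ⟨q, hq⟩ := hne₁
  obtain ⟨z₁, hz₁, hQ₁eq⟩ := hQ₁comp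
  obtain ⟨z₂, hz₂, hQ₂eq⟩ := hQ₂comp
  have h1 : Q₁ = connectedComponentIn (juliaSet g.toFun) q := by
    rw [hQ₁eq]
    exact connectedComponentIn_eq (by rw [← hQ₁eq]; exact hsub₁ hq)
  have h2 : Q₂ = connectedComponentIn (juliaSet g.toFun) q := by
    rw [hQ₂eq]
    exact connectedComponentIn_eq (by rw [← hQ₂eq]; exact hsub₂ hq)
  rw [h1, h2]

end
end

section
/- Let f be a rational map with an infinitely connected fixed attracting Fatou domain U whose attracting fixed point is ∞, with puzzle pieces 𝒫_n constructed as below. If P₁ ∈ 𝒫_{n₁} and P₂ ∈ 𝒫_{n₂} are puzzle pieces of different depths n₁ ≠ n₂, then exactly one of the following three alternatives holds: closure(P₁) ⊂ P₂, or closure(P₂) ⊂ P₁, or closure(P₁) ∩ closure(P₂) = ∅. -/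
open Set Topology Filter Metric OnePoint MeasureTheory Bornology
open scoped Classical

noncomputable section

-- components-in-closure lemma
lemma closure_ccIn_inter {X : Type*} [TopologicalSpace X] {s : Set X} {x : X}
    (hx : x ∈ s) : closure (connectedComponentIn s x) ∩ s ⊆ connectedComponentIn s x := by
  have hpc : IsPreconnected (closure (connectedComponentIn s x) ∩ s) := by
    apply isPreconnected_connectedComponentIn.subset_closure
    · exact subset_inter subset_closure (connectedComponentIn_subset s x)
    · exact inter_subset_left
  exact hpc.subset_connectedComponentIn
    ⟨subset_closure (mem_connectedComponentIn hx), hx⟩ inter_subset_right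

lemma isPathConnected_compl_closedBall_complex {r : ℝ} (hr : 0 < r) :
    IsPathConnected ((Metric.closedBall (0:ℂ) r)ᶜ) := by
  have h2 : IsPathConnected ({(0:ℂ)}ᶜ) :=
    isPathConnected_compl_singleton_of_one_lt_rank
      (by rw [Complex.rank_real_complex]; norm_num) 0
  set h : ℂ → ℂ := fun z => ((1 + r / ‖z‖ : ℝ) : ℂ) * z with hh
  have hcont : ContinuousOn h {(0:ℂ)}ᶜ := by
    apply ContinuousOn.mul _ continuousOn_id
    refine Complex.continuous_ofReal.comp_continuousOn ?_
    refine continuousOn_const.add (continuousOn_const.div continuous_norm.continuousOn ?_)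
    intro z hz
    simpa [norm_eq_zero] using hz
  have himg : h '' {(0:ℂ)}ᶜ = (Metric.closedBall (0:ℂ) r)ᶜ := by
    apply subset_antisymm
    · rintro _ ⟨z, hz, rfl⟩
      have hz0 : z ≠ 0 := hz
      have ha : 0 < ‖z‖ := norm_pos_iff.2 hz0
      simp only [mem_compl_iff, Metric.mem_closedBall, dist_zero_right, not_le]
      have hkey : ∀ a : ℝ, 0 < a → (1 + r / a) * a = a + r := by
        intro a ha'; field_simp
      have : ‖h z‖ = (1 + r / ‖z‖) * ‖z‖ := by
        rw [hh]
        simp only [norm_mul, Complex.norm_real, Real.norm_eq_abs]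
        rw [abs_of_pos (by positivity)]
      rw [this, hkey _ ha]; linarith
    · intro w hw
      simp only [mem_compl_iff, Metric.mem_closedBall, dist_zero_right, not_le] at hw
      have hw0 : w ≠ 0 := by
        intro h0; rw [h0] at hw; simp at hw; linarith
      set a := ‖w‖ with ha
      have ha0 : 0 < a := norm_pos_iff.2 hw0
      have har : r < a := hw
      refine ⟨((1 - r / a : ℝ) : ℂ) * w, ?_, ?_⟩
      · simp only [mem_compl_iff, mem_singleton_iff, mul_eq_zero, not_or]
        constructor
        · simp only [Complex.ofReal_eq_zero]
          intro h0
          have : r / a < 1 := (div_lt_one ha0).2 har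
          linarith
        · exact hw0
      · have h1ra : (0:ℝ) < 1 - r / a := by
          rw [sub_pos]; exact (div_lt_one ha0).2 har
        have hnorm : ‖((1 - r / a : ℝ) : ℂ) * w‖ = a - r := by
          rw [norm_mul, Complex.norm_real, Real.norm_of_nonneg h1ra.le, ← ha]
          field_simp
        rw [hh]
        simp only [hnorm]
        rw [← mul_assoc, ← Complex.ofReal_mul]
        have : (1 + r / (a - r)) * (1 - r / a) = 1 := by
          have h1 : a - r ≠ 0 := by linarith
          have h2 : a ≠ 0 := ne_of_gt ha0
          field_simp
          ring
        rw [this]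
        simp
  rw [← himg]
  exact h2.image' hcont

instance inst_s10 : LocallyConnectedSpace ℂ∞ := by
  rw [locallyConnectedSpace_iff_subsets_isOpen_isConnected]
  intro x U hU
  by_cases hx : x = ∞
  · subst hx
    obtain ⟨s, ⟨hsc, hsk⟩, hsub⟩ := (OnePoint.hasBasis_nhds_infty).mem_iff.mp hU
    obtain ⟨r, hsr⟩ := hsk.isBounded.subset_closedBall 0
    set r' : ℝ := max r 1 with hr'
    have hr'0 : 0 < r' := lt_of_lt_of_le one_pos (le_max_right _ _)
    have hsr' : s ⊆ Metric.closedBall 0 r' := hsr.trans (Metric.closedBall_subset_closedBall (le_max_left _ _))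
    set A : Set ℂ := (Metric.closedBall (0:ℂ) r')ᶜ with hA
    set N : Set ℂ∞ := ((↑) : ℂ → ℂ∞) '' A ∪ {∞} with hN
    have hNeq : N = (((↑) : ℂ → ℂ∞) '' (Metric.closedBall (0:ℂ) r'))ᶜ := by
      rw [OnePoint.compl_image_coe]
    have hNopen : IsOpen N := by
      rw [hNeq]
      exact OnePoint.isOpen_compl_image_coe.2 ⟨Metric.isClosed_closedBall, isCompact_closedBall _ _⟩
    have hAconn : IsConnected A := (isPathConnected_compl_closedBall_complex hr'0).isConnected
    have hmemN : ∀ R : ℝ, ∃ z : ℂ, R < ‖z‖ ∧ z ∈ A := by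
      intro R
      have hnrm : ‖((max R r' + 1 : ℝ) : ℂ)‖ = max R r' + 1 := by
        rw [Complex.norm_real, Real.norm_eq_abs, abs_of_pos (by positivity)]
      refine ⟨((max R r' + 1 : ℝ) : ℂ), ?_, ?_⟩
      · rw [hnrm]; have := le_max_left R r'; linarith
      · simp only [hA, mem_compl_iff, Metric.mem_closedBall, dist_zero_right, not_le]
        rw [hnrm]; have := le_max_right R r'; linarith
    have hinfclo : (∞ : ℂ∞) ∈ closure (((↑) : ℂ → ℂ∞) '' A) := by
      rw [mem_closure_iff_nhds]
      intro t ht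
      obtain ⟨s', ⟨hs'c, hs'k⟩, hs'sub⟩ := (OnePoint.hasBasis_nhds_infty).mem_iff.mp ht
      obtain ⟨R, hs'R⟩ := hs'k.isBounded.subset_closedBall 0
      obtain ⟨z, hzR, hzA⟩ := hmemN (max R 0)
      refine ⟨(z : ℂ∞), hs'sub ?_, mem_image_of_mem _ hzA⟩
      left
      refine mem_image_of_mem _ ?_
      intro hzs
      have := hs'R hzs
      simp only [Metric.mem_closedBall, dist_zero_right] at this
      have := le_max_left R 0
      linarith [lt_of_le_of_lt (le_max_left R 0) hzR]
    have hNconn : IsConnected N := by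
      obtain ⟨z, _, hzA⟩ := hmemN 0
      refine ⟨⟨(z:ℂ∞), Or.inl (mem_image_of_mem _ hzA)⟩, ?_⟩
      apply (hAconn.isPreconnected.image _ OnePoint.continuous_coe.continuousOn).subset_closure
        subset_union_left
      intro y hy
      rcases hy with hy | hy
      · exact subset_closure hy
      · rw [mem_singleton_iff] at hy; subst hy; exact hinfclo
    refine ⟨N, ?_, hNopen, Or.inr rfl, hNconn⟩
    intro y hy
    rcases hy with ⟨z, hzA, rfl⟩ | hy
    · apply hsub
      left
      exact mem_image_of_mem _ (fun hzs => hzA (hsr' hzs))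
    · rw [mem_singleton_iff] at hy; subst hy
      exact hsub (Or.inr rfl)
  · obtain ⟨z, rfl⟩ : ∃ z : ℂ, x = (z : ℂ∞) := by
      cases x with
      | infty => exact absurd rfl hx
      | coe z => exact ⟨z, rfl⟩
    have hU' : ((↑) : ℂ → ℂ∞) ⁻¹' U ∈ 𝓝 z :=
      OnePoint.continuous_coe.continuousAt.preimage_mem_nhds hU
    obtain ⟨V, hVU, hVopen, hzV, hVconn⟩ :=
      locallyConnectedSpace_iff_subsets_isOpen_isConnected.mp inferInstance z _ hU'
    refine ⟨((↑) : ℂ → ℂ∞) '' V, ?_, ?_, mem_image_of_mem _ hzV, ?_⟩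
    · exact (image_mono hVU).trans (image_preimage_subset _ _)
    · exact OnePoint.isOpenEmbedding_coe.isOpenMap _ hVopen
    · exact hVconn.image _ OnePoint.continuous_coe.continuousOn


lemma isClosed_ccIn {X : Type*} [TopologicalSpace X] {s : Set X} (hs : IsClosed s) (y : X) :
    IsClosed (connectedComponentIn s y) := by
  by_cases hy : y ∈ s
  · have : closure (connectedComponentIn s y) ⊆ connectedComponentIn s y := by
      apply isPreconnected_connectedComponentIn.closure.subset_connectedComponentIn
        (subset_closure (mem_connectedComponentIn hy))
      exact (closure_mono (connectedComponentIn_subset s y)).trans hs.closure_eq.subset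
    exact isClosed_of_closure_subset this
  · rw [connectedComponentIn_eq_empty hy]
    exact isClosed_empty

section Puzzle

variable {f : RationalMap} {U : Set ℂ∞} (PD : PuzzleData f U)

lemma RationalMap.continuous_s10 (f : RationalMap) : Continuous f.toFun :=
  continuous_iff_continuousAt.2 fun z => (f.holo z).1

lemma PuzzleData.infty_mem_pre (hfix : f.toFun ∞ = ∞) (n : ℕ) :
    (∞ : ℂ∞) ∈ f.toFun^[n] ⁻¹' PD.U0 := by
  simp only [Set.mem_preimage, Function.iterate_fixed hfix]
  exact PD.infty_mem

lemma PuzzleData.pre_mono (n : ℕ) :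
    f.toFun^[n] ⁻¹' PD.U0 ⊆ f.toFun^[n + 1] ⁻¹' PD.U0 := by
  intro z hz
  rw [Set.mem_preimage, Function.iterate_succ_apply']
  exact PD.closure_subset (subset_closure hz)

lemma PuzzleData.Un_mono {m n : ℕ} (h : m ≤ n) : PD.Un m ⊆ PD.Un n := by
  induction n, h using Nat.le_induction with
  | base => exact subset_rfl
  | succ n _ ih => exact ih.trans (connectedComponentIn_mono _ (PD.pre_mono n))

lemma PuzzleData.closure_Un (hfix : f.toFun ∞ = ∞) (n : ℕ) :
    closure (PD.Un n) ⊆ PD.Un (n + 1) := by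
  have h1 : closure (PD.Un n) ⊆ f.toFun^[n + 1] ⁻¹' PD.U0 := by
    intro z hz
    have h2 : z ∈ closure (f.toFun^[n] ⁻¹' PD.U0) :=
      closure_mono (connectedComponentIn_subset _ _) hz
    have h3 : z ∈ f.toFun^[n] ⁻¹' closure PD.U0 :=
      (f.continuous_s10.iterate n).closure_preimage_subset _ h2
    rw [Set.mem_preimage, Function.iterate_succ_apply']
    exact PD.closure_subset h3
  exact isPreconnected_connectedComponentIn.closure.subset_connectedComponentIn
    (subset_closure (mem_connectedComponentIn (PD.infty_mem_pre hfix n))) h1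

lemma PuzzleData.closure_Un_lt (hfix : f.toFun ∞ = ∞) {m n : ℕ} (h : m < n) :
    closure (PD.Un m) ⊆ PD.Un n :=
  (PD.closure_Un hfix m).trans (PD.Un_mono h)

/-- Key nesting lemma for pieces of depths `n₁ < n₂`. -/
lemma PuzzleData.key (hfix : f.toFun ∞ = ∞) {n₁ n₂ : ℕ} (hlt : n₁ < n₂)
    {P₁ P₂ : Set ℂ∞} (h₁ : PD.IsPiece n₁ P₁) (h₂ : PD.IsPiece n₂ P₂) :
    (¬ closure P₁ ⊆ P₂ ∧ closure P₂ ⊆ P₁ ∧ closure P₁ ∩ closure P₂ ≠ ∅) ∨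
    (¬ closure P₁ ⊆ P₂ ∧ ¬ closure P₂ ⊆ P₁ ∧ closure P₁ ∩ closure P₂ = ∅) := by
  obtain ⟨γ₁, ⟨y₁, hy₁, rfl⟩, ⟨z₁, hz₁, rfl⟩, hP₁inf⟩ := h₁
  obtain ⟨γ₂, ⟨y₂, hy₂, rfl⟩, ⟨z₂, hz₂, rfl⟩, hP₂inf⟩ := h₂
  set γ₁ : Set ℂ∞ := connectedComponentIn (frontier (PD.Un n₁)) y₁ with hγ₁
  set γ₂ : Set ℂ∞ := connectedComponentIn (frontier (PD.Un n₂)) y₂ with hγ₂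
  set P₁ : Set ℂ∞ := connectedComponentIn γ₁ᶜ z₁ with hP₁
  set P₂ : Set ℂ∞ := connectedComponentIn γ₂ᶜ z₂ with hP₂
  -- basic membership facts
  have hz₁P : z₁ ∈ P₁ := mem_connectedComponentIn hz₁
  have hz₂P : z₂ ∈ P₂ := mem_connectedComponentIn hz₂
  -- γ₁ sits inside Un n₂
  have hγ₁Un₂ : γ₁ ⊆ PD.Un n₂ :=
    ((connectedComponentIn_subset _ _).trans frontier_subset_closure).trans
      (PD.closure_Un_lt hfix hlt)
  -- Un n₂ is open, so γ₂ misses it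
  have hUn₂open : IsOpen (PD.Un n₂) :=
    (PD.isOpen'.preimage (f.continuous_s10.iterate n₂)).connectedComponentIn
  have hγ₂Un₂ : ∀ x ∈ γ₂, x ∉ PD.Un n₂ := by
    intro x hx hxU
    have hfr : x ∈ frontier (PD.Un n₂) := connectedComponentIn_subset _ _ hx
    rw [frontier, hUn₂open.interior_eq] at hfr
    exact hfr.2 hxU
  -- Un n₂ lies in the component of ∞ in γ₂ᶜ, hence misses P₂
  have hinfUn₂ : (∞ : ℂ∞) ∈ PD.Un n₂ := mem_connectedComponentIn (PD.infty_mem_pre hfix n₂)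
  have hUn₂Pinf : PD.Un n₂ ⊆ connectedComponentIn γ₂ᶜ ∞ :=
    isPreconnected_connectedComponentIn.subset_connectedComponentIn hinfUn₂
      (fun x hx hxγ => hγ₂Un₂ x hxγ hx)
  have hinfγ₂ : (∞ : ℂ∞) ∈ γ₂ᶜ := fun h => hγ₂Un₂ ∞ h hinfUn₂
  have hP₂Un₂ : ∀ x ∈ P₂, x ∉ PD.Un n₂ := by
    intro x hx hxU
    have hx1 : P₂ = connectedComponentIn γ₂ᶜ x := connectedComponentIn_eq hx
    have hx2 : connectedComponentIn γ₂ᶜ ∞ = connectedComponentIn γ₂ᶜ x :=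
      connectedComponentIn_eq (hUn₂Pinf hxU)
    apply hP₂inf
    rw [hx1, ← hx2]
    exact mem_connectedComponentIn hinfγ₂
  -- closures of components stay within the component plus the curve
  have hclP₂ : closure P₂ ⊆ P₂ ∪ γ₂ := by
    intro x hx
    by_cases hxγ : x ∈ γ₂
    · exact Or.inr hxγ
    · exact Or.inl (closure_ccIn_inter hz₂ ⟨hx, hxγ⟩)
  have hclP₁ : closure P₁ ⊆ P₁ ∪ γ₁ := by
    intro x hx
    by_cases hxγ : x ∈ γ₁
    · exact Or.inr hxγ
    · exact Or.inl (closure_ccIn_inter hz₁ ⟨hx, hxγ⟩)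
  -- closure P₂ misses Un n₂, hence misses γ₁
  have hclP₂Un₂ : ∀ x ∈ closure P₂, x ∉ PD.Un n₂ := by
    intro x hx
    rcases hclP₂ hx with h | h
    · exact hP₂Un₂ x h
    · exact hγ₂Un₂ x h
  have hclP₂γ₁ : closure P₂ ⊆ γ₁ᶜ := fun x hx hxγ => hclP₂Un₂ x hx (hγ₁Un₂ hxγ)
  -- closure P₂ lies in a single component of γ₁ᶜ, namely that of z₂
  have hC : closure P₂ ⊆ connectedComponentIn γ₁ᶜ z₂ :=
    isPreconnected_connectedComponentIn.closure.subset_connectedComponentIn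
      (subset_closure hz₂P) hclP₂γ₁
  by_cases hz₂P₁ : z₂ ∈ P₁
  · -- nested case : closure P₂ ⊆ P₁
    left
    have hP₁C : P₁ = connectedComponentIn γ₁ᶜ z₂ := connectedComponentIn_eq hz₂P₁
    refine ⟨?_, by rw [hP₁C]; exact hC, ?_⟩
    · intro hcon
      -- then P₁ would be clopen, nonempty, avoiding ∞ : impossible
      have hγ₁closed : IsClosed γ₁ := isClosed_ccIn isClosed_frontier y₁
      have hP₁open : IsOpen P₁ := hγ₁closed.isOpen_compl.connectedComponentIn
      have hclγ₁ : closure P₁ ∩ γ₁ = ∅ := by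
        rw [Set.eq_empty_iff_forall_notMem]
        rintro x ⟨hx, hxγ⟩
        exact hP₂Un₂ x (hcon hx) (hγ₁Un₂ hxγ)
      have hP₁closed : IsClosed P₁ := by
        apply isClosed_of_closure_subset
        intro x hx
        rcases hclP₁ hx with h | h
        · exact h
        · exact absurd (Set.mem_inter hx h) (by rw [hclγ₁]; exact Set.notMem_empty x)
      have huniv : P₁ = Set.univ := IsClopen.eq_univ ⟨hP₁closed, hP₁open⟩ ⟨z₁, hz₁P⟩
      exact hP₁inf (by rw [huniv]; exact Set.mem_univ _)
    · apply Set.Nonempty.ne_empty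
      exact ⟨z₂, subset_closure hz₂P₁, subset_closure hz₂P⟩
  · -- disjoint case
    right
    have hdisj : closure P₁ ∩ closure P₂ = ∅ := by
      rw [Set.eq_empty_iff_forall_notMem]
      rintro x ⟨hx₁, hx₂⟩
      have hxγ₁ : x ∉ γ₁ := hclP₂γ₁ hx₂
      have hxP₁ : x ∈ P₁ := (hclP₁ hx₁).resolve_right hxγ₁
      have heq : P₁ = connectedComponentIn γ₁ᶜ z₂ :=
        (connectedComponentIn_eq hxP₁).trans (connectedComponentIn_eq (hC hx₂)).symm
      apply hz₂P₁
      rw [heq]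
      exact mem_connectedComponentIn (hclP₂γ₁ (subset_closure hz₂P))
    refine ⟨?_, ?_, hdisj⟩
    · intro hcon
      have : z₁ ∈ closure P₁ ∩ closure P₂ :=
        ⟨subset_closure hz₁P, subset_closure (hcon (subset_closure hz₁P))⟩
      rw [hdisj] at this
      exact this
    · intro hcon
      exact hz₂P₁ (hcon (subset_closure hz₂P))

end Puzzle

/-- Puzzle pieces of different depths are nested or have disjoint closures: exactly
one of `closure P₁ ⊆ P₂`, `closure P₂ ⊆ P₁`, `closure P₁ ∩ closure P₂ = ∅` holds. -/
theorem puzzle_pieces_nested_or_disjoint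
    (f : RationalMap) (U : Set ℂ∞)
    (hU : IsFixedAttractingAtInfty f U)
    (hic : InfinitelyConnected U)
    (PD : PuzzleData f U)
    (n₁ n₂ : ℕ) (hne : n₁ ≠ n₂)
    (P₁ P₂ : Set ℂ∞) (h₁ : PD.IsPiece n₁ P₁) (h₂ : PD.IsPiece n₂ P₂) :
    (closure P₁ ⊆ P₂ ∧ ¬ closure P₂ ⊆ P₁ ∧ closure P₁ ∩ closure P₂ ≠ ∅) ∨
    (¬ closure P₁ ⊆ P₂ ∧ closure P₂ ⊆ P₁ ∧ closure P₁ ∩ closure P₂ ≠ ∅) ∨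
    (¬ closure P₁ ⊆ P₂ ∧ ¬ closure P₂ ⊆ P₁ ∧ closure P₁ ∩ closure P₂ = ∅) := by
  rcases hne.lt_or_gt with hlt | hlt
  · rcases PD.key hU.2.2.2.1 hlt h₁ h₂ with ⟨a, b, c⟩ | ⟨a, b, c⟩
    · exact Or.inr (Or.inl ⟨a, b, c⟩)
    · exact Or.inr (Or.inr ⟨a, b, c⟩)
  · rcases PD.key hU.2.2.2.1 hlt h₂ h₁ with ⟨a, b, c⟩ | ⟨a, b, c⟩
    · exact Or.inl ⟨b, a, by rwa [Set.inter_comm] at c⟩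
    · exact Or.inr (Or.inr ⟨b, a, by rwa [Set.inter_comm] at c⟩)


end
end
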